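/- Suppose each Φᵢ (i = 1,…,k) is a triangular system for (X, cl), and let a ∈ X and B ⊆ X. Then lim_{min(s̄)→∞} rk(Φ^{(s̄)}({a}) | Φ^{(s̄)}(B)) / |Φ^{(s̄)}| equals 0 if a ∈ cl^Φ(B), and equals 1 if a ∉ cl^Φ(B). -/

import Mathlib

open Set

/-- A finitary matroid (pregeometry): a closure operator satisfying monotonicity,
idempotence, finite character and Steinitz exchange. -/
structure FinMatroid (X : Type*) where
  cl : Set X → Set X
  subset_cl : ∀ A : Set X, A ⊆ cl A
  cl_mono : ∀ ⦃A B : Set X⦄, A ⊆ B → cl A ⊆ cl B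
  cl_idem : ∀ A : Set X, cl (cl A) = cl A
  cl_finChar : ∀ (A : Set X) (a : X), a ∈ cl A → ∃ A₀ ⊆ A, A₀.Finite ∧ a ∈ cl A₀
  cl_exchange : ∀ (a b : X) (A : Set X), a ∈ cl (A ∪ {b}) → a ∉ cl A → b ∈ cl (A ∪ {a})

namespace FinMatroid

variable {X : Type*}

/-- `B` is `cl`-independent over `A`. -/
def Indep (M : FinMatroid X) (A B : Set X) : Prop :=
  ∀ b ∈ B, b ∉ M.cl (A ∪ (B \ {b}))

/-- `B₀` is a basis for `B` over `A`. -/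
def IsBasisOver (M : FinMatroid X) (A B B₀ : Set X) : Prop :=
  B₀ ⊆ B ∧ M.Indep A B₀ ∧ B ⊆ M.cl (A ∪ B₀)

/-- The rank `rk(B|A)`: the common cardinality of bases of `B` over `A`. -/
noncomputable def rk (M : FinMatroid X) (B A : Set X) : ℕ :=
  sInf {n : ℕ | ∃ B₀ : Set X, M.IsBasisOver A B B₀ ∧ B₀.ncard = n}

end FinMatroid

/-- `ψ` is a triangular system for the finitary matroid `M`. -/
def Triangular {X : Type*} (M : FinMatroid X) {n : ℕ} (ψ : Fin n → X → X) : Prop :=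
  ∀ (i : Fin n) (a : X) (B : Set X), a ∈ M.cl B →
    ψ i a ∈ M.cl (⋃ j ∈ Finset.Iic i, (ψ j) '' B)

/-- `ψ` is quasi-triangular: the system augmented by the identity map is triangular. -/
def QuasiTriangular {X : Type*} (M : FinMatroid X) {n : ℕ} (ψ : Fin n → X → X) : Prop :=
  Triangular M (Fin.cons id ψ)

/-- The composite operator `φ^r̄ = φ₁^{r₁} ∘ ⋯ ∘ φ_m^{r_m}` (operators indexed by
pairs `(i, j)` with `i : Fin k`, `j : Fin (d i)`). -/
def opPow {X : Type*} {k : ℕ} {d : Fin k → ℕ} (φ : ∀ i : Fin k, Fin (d i) → X → X)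
    (r : ∀ i : Fin k, Fin (d i) → ℕ) : X → X :=
  (List.finRange k).foldr
    (fun i f => ((List.finRange (d i)).foldr (fun j g => (φ i j)^[r i j] ∘ g) id) ∘ f) id

/-- The operators pairwise commute. -/
def Commuting {X : Type*} {k : ℕ} {d : Fin k → ℕ}
    (φ : ∀ i : Fin k, Fin (d i) → X → X) : Prop :=
  ∀ i j i' j', Function.Commute (φ i j) (φ i' j')

/-- `Φ^{(s̄)}(A)`: images of elements of `A` under all `φ^r̄` with `‖r̄‖ = s̄`. -/
def PhiEq {X : Type*} {k : ℕ} {d : Fin k → ℕ} (φ : ∀ i : Fin k, Fin (d i) → X → X)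
    (s : Fin k → ℕ) (A : Set X) : Set X :=
  {x | ∃ r : ∀ i : Fin k, Fin (d i) → ℕ,
    (∀ i, ∑ j, r i j = s i) ∧ ∃ a ∈ A, x = opPow φ r a}

/-- `Φ^{≼(s̄)}(A)`: images of elements of `A` under all `φ^r̄` with `‖r̄‖ ≼ s̄`. -/
def PhiLe {X : Type*} {k : ℕ} {d : Fin k → ℕ} (φ : ∀ i : Fin k, Fin (d i) → X → X)
    (s : Fin k → ℕ) (A : Set X) : Set X :=
  {x | ∃ r : ∀ i : Fin k, Fin (d i) → ℕ,
    (∀ i, ∑ j, r i j ≤ s i) ∧ ∃ a ∈ A, x = opPow φ r a}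

/-- `|Φ^{(s̄)}|`: the number of `r̄ ∈ ℕ^m` with `‖r̄‖ = s̄`. -/
noncomputable def cntEq {k : ℕ} (d : Fin k → ℕ) (s : Fin k → ℕ) : ℕ :=
  Nat.card {r : ∀ i : Fin k, Fin (d i) → ℕ // ∀ i, ∑ j, r i j = s i}

/-- `|Φ^{≼(s̄)}|`: the number of `r̄ ∈ ℕ^m` with `‖r̄‖ ≼ s̄`. -/
noncomputable def cntLe {k : ℕ} (d : Fin k → ℕ) (s : Fin k → ℕ) : ℕ :=
  Nat.card {r : ∀ i : Fin k, Fin (d i) → ℕ // ∀ i, ∑ j, r i j ≤ s i}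

/-- `Θ(A)`: images of elements of `A` under all the operators `φ^r̄`, `r̄ ∈ ℕ^m`. -/
def Theta {X : Type*} {k : ℕ} {d : Fin k → ℕ} (φ : ∀ i : Fin k, Fin (d i) → X → X)
    (A : Set X) : Set X :=
  {x | ∃ r : ∀ i : Fin k, Fin (d i) → ℕ, ∃ a ∈ A, x = opPow φ r a}

/-- The `Φ`-closure operator. -/
noncomputable def clPhi {X : Type*} {k : ℕ} {d : Fin k → ℕ} (M : FinMatroid X)
    (φ : ∀ i : Fin k, Fin (d i) → X → X) (B : Set X) : Set X :=
  {a | ∃ s : Fin k → ℕ, M.rk (PhiEq φ s {a}) (PhiEq φ s B) < cntEq d s}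

/-- The `Φ*`-closure operator. -/
noncomputable def clPhiStar {X : Type*} {k : ℕ} {d : Fin k → ℕ} (M : FinMatroid X)
    (φ : ∀ i : Fin k, Fin (d i) → X → X) (B : Set X) : Set X :=
  {a | ∃ s : Fin k → ℕ, M.rk (PhiLe φ s {a}) (PhiLe φ s B) < cntLe d s}

/-- View a function `Fin k → ℕ` as a monomial exponent. -/
noncomputable def expOf {k : ℕ} (e : Fin k → ℕ) : Fin k →₀ ℕ :=
  Finsupp.equivFunOnFinite.symm e

/-!
Order the exponents by a weight `c` that is monotone inside each block and injective on a
slice, as in a monomial order. If `rk(Φ^{(s̄₀)}({a}) | Φ^{(s̄₀)}(B)) < |Φ^{(s̄₀)}|`, the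
`φ^q̄(a)` with `‖q̄‖ = s̄₀` are not in echelon form, so some `φ^{r̄₀}(a)` is the leading term of
a relation with `Φ^{(s̄₀)}(B)`. Triangularity propagates it to every leading term
`φ^{r̄₀ + t̄}(a)`, so for `s̄ ≥ s̄₀` the terms `φ^q̄(a)` with `q̄` not above `r̄₀` span
`Φ^{(s̄)}({a})` over `Φ^{(s̄)}(B)`. Hence the rank is at most `|Φ^{(s̄)}| - |Φ^{(s̄ - s̄₀)}|`,
and `|Φ^{(s̄ - s̄₀)}| / |Φ^{(s̄)}| → 1` because both are products of binomial coefficients of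
the same degrees. If `a ∉ cl^Φ(B)` the ratio is identically `1`.
-/

namespace FinMatroid

variable {X : Type*} (M : FinMatroid X)

lemma cl_subset_cl {A B : Set X} (h : A ⊆ M.cl B) : M.cl A ⊆ M.cl B := by
  simpa only [M.cl_idem] using M.cl_mono h

lemma exists_mem_cl_insert_union_diff {A B : Set X} (hB : B.Finite) {x : X}
    (hx : x ∈ M.cl (A ∪ B)) (hxA : x ∉ M.cl A) :
    ∃ y ∈ B, y ∈ M.cl (insert x A ∪ (B \ {y})) := by
  induction B, hB using Set.Finite.induction_on with
  | empty => exact absurd (by simpa using hx) hxA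
  | @insert b T hbT _ ih =>
    by_cases hxT : x ∈ M.cl (A ∪ T)
    · obtain ⟨y, hyT, hy⟩ := ih hxT
      refine ⟨y, mem_insert_of_mem b hyT, M.cl_mono ?_ hy⟩
      exact union_subset_union_right _ (sdiff_subset_sdiff_left (subset_insert b T))
    · have hx' : x ∈ M.cl ((A ∪ T) ∪ {b}) := by
        rwa [union_singleton, ← union_insert]
      refine ⟨b, mem_insert b T, M.cl_mono ?_ (M.cl_exchange x b _ hx' hxT)⟩
      rintro z ((hz | hz) | rfl)
      · exact Or.inl (mem_insert_of_mem x hz)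
      · exact Or.inr ⟨mem_insert_of_mem b hz, fun h => hbT (h ▸ hz)⟩
      · exact Or.inl (mem_insert z A)

/-- Take a minimal spanning subset of `S`. -/
lemma exists_isBasisOver_subset {W V S : Set X} (hS : S.Finite) (hSV : S ⊆ V)
    (hVS : V ⊆ M.cl (W ∪ S)) : ∃ B₀ ⊆ S, M.IsBasisOver W V B₀ := by
  obtain ⟨B₀, ⟨hB₀S, hVB₀⟩, hmin⟩ := (hS.finite_subsets.subset
    (fun T hT => hT.1 : {T | T ⊆ S ∧ V ⊆ M.cl (W ∪ T)} ⊆ {T | T ⊆ S})).exists_minimal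
    ⟨S, subset_rfl, hVS⟩
  refine ⟨B₀, hB₀S, hB₀S.trans hSV, fun b hb hbcl => ?_, hVB₀⟩
  have hspan : V ⊆ M.cl (W ∪ (B₀ \ {b})) := by
    refine hVB₀.trans (M.cl_subset_cl fun z hz => ?_)
    by_cases hzb : z = b
    · exact hzb ▸ hbcl
    · rcases hz with hz | hz
      · exact M.subset_cl _ (Or.inl hz)
      · exact M.subset_cl _ (Or.inr ⟨hz, hzb⟩)
  exact (hmin ⟨sdiff_subset.trans hB₀S, hspan⟩ sdiff_subset hb).2 rfl

lemma rk_le_ncard_of_isBasisOver {W V B₀ : Set X} (h : M.IsBasisOver W V B₀) :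
    M.rk V W ≤ B₀.ncard :=
  Nat.sInf_le ⟨B₀, h, rfl⟩

lemma rk_le_ncard {W V S : Set X} (hS : S.Finite) (hSV : S ⊆ V) (hVS : V ⊆ M.cl (W ∪ S)) :
    M.rk V W ≤ S.ncard := by
  obtain ⟨B₀, hB₀S, hB₀⟩ := M.exists_isBasisOver_subset hS hSV hVS
  exact (M.rk_le_ncard_of_isBasisOver hB₀).trans (ncard_le_ncard hB₀S hS)

lemma exists_isBasisOver_ncard_eq_rk {W V : Set X} (hV : V.Finite) :
    ∃ B₀, M.IsBasisOver W V B₀ ∧ B₀.ncard = M.rk V W := by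
  obtain ⟨B₀, -, hB₀⟩ :=
    M.exists_isBasisOver_subset hV subset_rfl fun v hv => M.subset_cl _ (Or.inr hv)
  exact Nat.sInf_mem (s := {n | ∃ B₀, M.IsBasisOver W V B₀ ∧ B₀.ncard = n}) ⟨_, B₀, hB₀, rfl⟩

/-- Steinitz: exchange the members of `R`, highest `L`-level first, into the spanning set. -/
lemma card_le_ncard_of_echelon {ι : Type*} {W B₀ : Set X} (hB₀ : B₀.Finite) (x : ι → X)
    (L : ι → ℕ) {R : Finset ι} (hL : InjOn L R)
    (hech : ∀ r ∈ R, x r ∉ M.cl (W ∪ x '' {q | q ∈ R ∧ L q < L r}))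
    (hspan : ∀ r ∈ R, x r ∈ M.cl (W ∪ B₀)) : R.card ≤ B₀.ncard := by
  classical
  suffices h : ∀ T ⊆ R, ∃ B' ⊆ B₀, B₀ ⊆ M.cl ((W ∪ x '' T) ∪ B') ∧ B'.ncard + T.card ≤ B₀.ncard by
    obtain ⟨B', -, -, h⟩ := h R subset_rfl
    omega
  intro T
  refine Finset.induction_on_max_value L T (fun _ => ?_) fun a T haT hmax ih hTR => ?_
  · exact ⟨B₀, subset_rfl, fun z hz => M.subset_cl _ (Or.inr hz), by simp⟩
  have haR : a ∈ R := hTR (Finset.mem_insert_self a T)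
  obtain ⟨B', hB'B₀, hB₀B', hcard⟩ := ih ((Finset.subset_insert a T).trans hTR)
  have hxa : x a ∉ M.cl (W ∪ x '' T) := by
    refine fun h => hech a haR (M.cl_mono (union_subset_union_right _ ?_) h)
    rintro _ ⟨q, hq, rfl⟩
    have hqR := hTR (Finset.mem_insert_of_mem hq)
    exact ⟨q, ⟨hqR, (hmax q hq).lt_of_ne fun h => haT (hL hqR haR h ▸ hq)⟩, rfl⟩
  have hxa' : x a ∈ M.cl ((W ∪ x '' T) ∪ B') := by
    refine M.cl_subset_cl (fun z hz => ?_) (hspan a haR)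
    rcases hz with hz | hz
    · exact M.subset_cl _ (Or.inl (Or.inl hz))
    · exact hB₀B' hz
  obtain ⟨y, hyB', hy⟩ :=
    M.exists_mem_cl_insert_union_diff (hB₀.subset hB'B₀) hxa' hxa
  have hxT : insert (x a) (W ∪ x '' T) ⊆ W ∪ x '' ↑(insert a T) := by
    rw [Finset.coe_insert, image_insert_eq, union_insert]
  refine ⟨B' \ {y}, sdiff_subset.trans hB'B₀, hB₀B'.trans (M.cl_subset_cl fun z hz => ?_), ?_⟩
  · by_cases hzy : z = y
    · subst hzy
      exact M.cl_mono (union_subset_union_left _ hxT) hy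
    · refine M.subset_cl _ ?_
      rcases hz with (hz | ⟨q, hq, rfl⟩) | hz
      · exact Or.inl (Or.inl hz)
      · exact Or.inl (Or.inr ⟨q, Finset.mem_insert_of_mem hq, rfl⟩)
      · exact Or.inr ⟨hz, hzy⟩
  · rw [ncard_sdiff_singleton_of_mem hyB', Finset.card_insert_of_notMem haT]
    have := (ncard_pos (hB₀.subset hB'B₀)).2 ⟨y, hyB'⟩
    omega

end FinMatroid

section Exponents

variable {k : ℕ} {d : Fin k → ℕ}

/-- Exponents `r̄ ∈ ℕ^m`, indexed blockwise as in `opPow`. -/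
abbrev Exponent (d : Fin k → ℕ) := ∀ i : Fin k, Fin (d i) → ℕ

def unitExp (i : Fin k) (j : Fin (d i)) : Exponent d := Pi.single i (Pi.single j 1)

/-- `‖r̄‖`. -/
def blockSum (r : Exponent d) : Fin k → ℕ := fun i => ∑ j, r i j

def slice (d : Fin k → ℕ) (s : Fin k → ℕ) : Set (Exponent d) := {r | blockSum r = s}

def weight (c r : Exponent d) : ℕ := ∑ i, ∑ j, r i j * c i j

lemma le_blockSum (r : Exponent d) (i : Fin k) (j : Fin (d i)) : r i j ≤ blockSum r i :=
  Finset.single_le_sum (fun j _ => Nat.zero_le (r i j)) (Finset.mem_univ j)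

lemma blockSum_add (r t : Exponent d) : blockSum (r + t) = blockSum r + blockSum t :=
  funext fun _ => Finset.sum_add_distrib

lemma blockSum_unitExp (i : Fin k) (j : Fin (d i)) :
    blockSum (unitExp i j) = Pi.single i 1 := by
  funext i'
  by_cases h : i' = i
  · subst h; simp [blockSum, unitExp]
  · simp [blockSum, unitExp, h]

lemma weight_add (c r t : Exponent d) : weight c (r + t) = weight c r + weight c t := by
  simp only [weight, Pi.add_apply, add_mul, Finset.sum_add_distrib]

lemma weight_unitExp (c : Exponent d) (i : Fin k) (j : Fin (d i)) :
    weight c (unitExp i j) = c i j := by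
  rw [weight, Finset.sum_eq_single i (fun i' _ h => by simp [unitExp, h]) (by simp),
    Finset.sum_eq_single j (fun j' _ h => by simp [unitExp, h]) (by simp)]
  simp [unitExp]

lemma slice_finite (s : Fin k → ℕ) : (slice d s).Finite := by
  refine (Set.finite_Iic (fun i _ => s i : Exponent d)).subset fun r hr i j => ?_
  exact (le_blockSum r i j).trans_eq (congrFun hr i)

lemma cntEq_eq_ncard_slice (s : Fin k → ℕ) : cntEq d s = (slice d s).ncard := by
  rw [← Nat.card_coe_set_eq]
  exact Nat.card_congr (Equiv.subtypeEquivRight fun r => funext_iff.symm)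

/-- Stars and bars, blockwise. -/
lemma cntEq_eq_prod_multichoose (s : Fin k → ℕ) :
    cntEq d s = ∏ i, (d i).multichoose (s i) := by
  rw [cntEq, Nat.card_congr (Equiv.subtypePiEquivPi (p := fun i (f : Fin (d i) → ℕ) =>
    ∑ j, f j = s i)), Nat.card_pi]
  refine Finset.prod_congr rfl fun i _ => ?_
  rw [← Nat.card_congr (Sym.equivNatSumOfFintype (Fin (d i)) (s i)),
    Sym.natCard_sym_eq_multichoose, Nat.card_fin]

lemma cntEq_pos (hd : ∀ i, 0 < d i) (s : Fin k → ℕ) : 0 < cntEq d s := by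
  rw [cntEq_eq_prod_multichoose]
  refine Finset.prod_pos fun i _ => ?_
  rw [Nat.multichoose_eq]
  exact Nat.choose_pos (by have := hd i; omega)

lemma ncard_slice_inter_Ici {s₀ s : Fin k → ℕ} {r₀ : Exponent d} (hr₀ : r₀ ∈ slice d s₀)
    (hs : s₀ ≤ s) : (slice d s ∩ Ici r₀).ncard = cntEq d (s - s₀) := by
  have : slice d s ∩ Ici r₀ = (r₀ + ·) '' slice d (s - s₀) := by
    ext q
    refine ⟨fun ⟨hq, hrq⟩ => ⟨q - r₀, ?_, add_tsub_cancel_of_le hrq⟩, ?_⟩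
    · have h := blockSum_add r₀ (q - r₀)
      rw [add_tsub_cancel_of_le hrq, hq, hr₀] at h
      show blockSum (q - r₀) = s - s₀
      rw [h, add_tsub_cancel_left]
    · rintro ⟨t, ht, rfl⟩
      refine ⟨?_, fun i j => Nat.le_add_right _ _⟩
      show blockSum (r₀ + t) = s
      rw [blockSum_add, hr₀, ht, add_tsub_cancel_of_le hs]
  rw [this, ncard_image_of_injective _ (add_right_injective r₀), cntEq_eq_ncard_slice]

end Exponents

section Weights

variable {k : ℕ} {d : Fin k → ℕ}

/-- `c i j = b ^ pos (i, j)`, with `b` exceeding every entry of an exponent in `slice d s₀` and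
`pos` the lexicographic enumeration of the pairs `(i, j)`: weights are then base-`b` numerals. -/
lemma exists_monotone_weight_injOn (s₀ : Fin k → ℕ) :
    ∃ c : Exponent d, (∀ i, Monotone (c i)) ∧ InjOn (weight c) (slice d s₀) := by
  set b := Finset.univ.sup s₀ + 1
  let e : (Σ i, Fin (d i)) ≃ Fin (∑ i, d i) := finSigmaFinEquiv
  have hdigit : ∀ r ∈ slice d s₀, ∀ i j, r i j < b := fun r hr i j =>
    (le_blockSum r i j).trans_lt <| (congrFun hr i).trans_lt <|
      Nat.lt_succ_of_le (Finset.le_sup (Finset.mem_univ i))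
  let digits (r : Exponent d) (hr : r ∈ slice d s₀) : Fin (∑ i, d i) → Fin b :=
    fun x => ⟨Sigma.uncurry r (e.symm x), hdigit r hr _ _⟩
  refine ⟨fun i j => b ^ (e ⟨i, j⟩ : ℕ), fun i j j' hjj' => Nat.pow_le_pow_right (by omega) ?_,
    fun q hq q' hq' hqq' => ?_⟩
  · simpa [e, finSigmaFinEquiv_apply] using hjj'
  have hval : ∀ r hr,
      (finFunctionFinEquiv (digits r hr) : ℕ) = weight (fun i j => b ^ (e ⟨i, j⟩ : ℕ)) r := by
    intro r hr
    rw [finFunctionFinEquiv_apply, weight, ← e.sum_comp, Fintype.sum_sigma]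
    simp only [digits, Equiv.symm_apply_apply]
    rfl
  have := finFunctionFinEquiv.injective
    (Fin.ext ((hval q hq).trans (hqq'.trans (hval q' hq').symm)))
  funext i j
  have hij := congrArg Fin.val (congrFun this (e ⟨i, j⟩))
  simp only [digits, Equiv.symm_apply_apply] at hij
  exact hij

end Weights

section Operators

universe u

variable {X : Type u} {k : ℕ} {d : Fin k → ℕ} (φ : ∀ i : Fin k, Fin (d i) → X → X)

lemma List.foldr_comp_eq_prod {ι : Type*} (l : List ι) (F : ι → Function.End X) :
    l.foldr (fun i f => F i ∘ f) id = (l.map F).prod := by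
  induction l with
  | nil => rfl
  | cons a l ih => simp only [List.foldr_cons, ih, List.map_cons, List.prod_cons]; rfl

open scoped IsMulCommutative in
lemma Commuting.exists_opPow_eq_prod (hcomm : Commuting φ) :
    ∃ (N : Type u) (_ : CommMonoid N) (f : N →* Function.End X) (ψ : ∀ i, Fin (d i) → N),
      (∀ i j, f (ψ i j) = φ i j) ∧ ∀ r : Exponent d, opPow φ r = f (∏ i, ∏ j, ψ i j ^ r i j) := by
  let S : Submonoid (Function.End X) :=
    Submonoid.closure (range fun ij : Σ i, Fin (d i) => (φ ij.1 ij.2 : Function.End X))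
  have : IsMulCommutative S := Submonoid.isMulCommutative_closure _ (by
    rintro _ ⟨⟨i, j⟩, rfl⟩ _ ⟨⟨i', j'⟩, rfl⟩
    exact funext (hcomm i j i' j'))
  refine ⟨S, inferInstance, S.subtype,
    fun i j => ⟨φ i j, Submonoid.subset_closure ⟨⟨i, j⟩, rfl⟩⟩, fun _ _ => rfl, fun r => ?_⟩
  simp only [Submonoid.coe_subtype, Fin.prod_univ_def, SubmonoidClass.coe_list_prod,
    List.map_map, opPow]
  rw [← List.foldr_comp_eq_prod]
  congr 1
  funext i f
  simp only [Function.comp_apply, SubmonoidClass.coe_list_prod, List.map_map]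
  rw [← List.foldr_comp_eq_prod]
  rfl

lemma opPow_add (hcomm : Commuting φ) (r t : Exponent d) :
    opPow φ (r + t) = opPow φ r ∘ opPow φ t := by
  obtain ⟨N, _, f, ψ, -, h⟩ := hcomm.exists_opPow_eq_prod
  simp only [h, Pi.add_apply, pow_add, Finset.prod_mul_distrib, map_mul]
  rfl

lemma opPow_unitExp (hcomm : Commuting φ) (i : Fin k) (j : Fin (d i)) :
    opPow φ (unitExp i j) = φ i j := by
  obtain ⟨N, _, f, ψ, hψ, h⟩ := hcomm.exists_opPow_eq_prod
  rw [h, Finset.prod_eq_single i (fun i' _ h => by simp [unitExp, h]) (by simp),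
    Finset.prod_eq_single j (fun j' _ h => by simp [unitExp, h]) (by simp)]
  simp [unitExp, hψ]

lemma opPow_add_unitExp (hcomm : Commuting φ) (r : Exponent d) (i : Fin k) (j : Fin (d i))
    (x : X) : opPow φ (r + unitExp i j) x = φ i j (opPow φ r x) := by
  rw [add_comm, opPow_add φ hcomm, opPow_unitExp φ hcomm, Function.comp_apply]

lemma mem_PhiEq {s : Fin k → ℕ} {A : Set X} {x : X} :
    x ∈ PhiEq φ s A ↔ ∃ r ∈ slice d s, ∃ a ∈ A, x = opPow φ r a := by
  simp only [PhiEq, slice, blockSum, funext_iff]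
  rfl

lemma PhiEq_singleton (s : Fin k → ℕ) (a : X) :
    PhiEq φ s {a} = (opPow φ · a) '' slice d s := by
  ext x
  simp [mem_PhiEq, eq_comm]

lemma image_PhiEq_subset (hcomm : Commuting φ) (s : Fin k → ℕ) (A : Set X) (i : Fin k)
    (j : Fin (d i)) : φ i j '' PhiEq φ s A ⊆ PhiEq φ (s + Pi.single i 1) A := by
  rintro _ ⟨x, hx, rfl⟩
  obtain ⟨r, hr, a, ha, rfl⟩ := (mem_PhiEq φ).1 hx
  refine (mem_PhiEq φ).2 ⟨r + unitExp i j, ?_, a, ha, (opPow_add_unitExp φ hcomm r i j a).symm⟩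
  show blockSum _ = _
  rw [blockSum_add, blockSum_unitExp, hr]

end Operators

section LeadingExponents

variable {X : Type*} (M : FinMatroid X) {k : ℕ} {d : Fin k → ℕ}
  (φ : ∀ i : Fin k, Fin (d i) → X → X) (c : Exponent d) (B : Set X) (a : X)

def lowerTerms (p : Exponent d) : Set X :=
  (opPow φ · a) '' {q | blockSum q = blockSum p ∧ weight c q < weight c p}

/-- `φ^p̄(a)` is the leading term of a relation with `Φ^{(‖p̄‖)}(B)`. -/
def IsLeadingExponent (p : Exponent d) : Prop :=
  opPow φ p a ∈ M.cl (PhiEq φ (blockSum p) B ∪ lowerTerms φ c a p)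

variable {M φ c B a}

/-- Apply `φ i j` to the relation and use triangularity; since `c i` is monotone, the images of
the lower terms stay below the new leading term. -/
lemma IsLeadingExponent.add_unitExp (hcomm : Commuting φ) (htri : ∀ i, Triangular M (φ i))
    (hc : ∀ i, Monotone (c i)) {p : Exponent d} (hp : IsLeadingExponent M φ c B a p)
    (i : Fin k) (j : Fin (d i)) : IsLeadingExponent M φ c B a (p + unitExp i j) := by
  rw [IsLeadingExponent, opPow_add_unitExp φ hcomm]
  refine M.cl_mono ?_ (htri i j _ _ hp)
  simp only [iUnion_subset_iff, Finset.mem_Iic]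
  intro j' hj'
  rw [image_union]
  refine union_subset_union ?_ ?_
  · rw [blockSum_add, blockSum_unitExp]
    exact image_PhiEq_subset φ hcomm _ B i j'
  · rintro _ ⟨_, ⟨q, ⟨hq, hqp⟩, rfl⟩, rfl⟩
    refine ⟨q + unitExp i j', ⟨?_, ?_⟩, opPow_add_unitExp φ hcomm q i j' a⟩
    · rw [blockSum_add, blockSum_add, blockSum_unitExp, blockSum_unitExp, hq]
    · rw [weight_add, weight_add, weight_unitExp, weight_unitExp]
      exact add_lt_add_of_lt_of_le hqp (hc i hj')

lemma IsLeadingExponent.add (hcomm : Commuting φ) (htri : ∀ i, Triangular M (φ i))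
    (hc : ∀ i, Monotone (c i)) {r₀ : Exponent d} (hr₀ : IsLeadingExponent M φ c B a r₀)
    (t : Exponent d) : IsLeadingExponent M φ c B a (r₀ + t) := by
  induction t using WellFoundedLT.induction with
  | _ t ih =>
    by_cases ht : t = 0
    · rwa [ht, add_zero]
    obtain ⟨i, j, hij⟩ : ∃ i j, t i j ≠ 0 := by
      by_contra! h
      exact ht (funext fun i => funext (h i))
    have hle : unitExp i j ≤ t := by
      intro i' j'
      by_cases hi : i' = i
      · subst hi
        by_cases hj : j' = j
        · subst hj; simpa [unitExp, Nat.one_le_iff_ne_zero] using hij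
        · simp [unitExp, hj]
      · simp [unitExp, hi]
    have hlt : t - unitExp i j < t := by
      refine lt_of_le_of_ne tsub_le_self fun h => hij ?_
      simpa [unitExp] using congrFun (congrFun ((tsub_eq_iff_eq_add_of_le hle).1 h) i) j
    have := (ih _ hlt).add_unitExp hcomm htri hc i j
    rwa [add_assoc, tsub_add_cancel_of_le hle] at this

/-- Reduce leading terms repeatedly, by induction on the weight. -/
lemma opPow_mem_cl_of_isLeadingExponent (hcomm : Commuting φ)
    (htri : ∀ i, Triangular M (φ i)) (hc : ∀ i, Monotone (c i)) {r₀ : Exponent d}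
    (hr₀ : IsLeadingExponent M φ c B a r₀) {s : Fin k → ℕ} {q : Exponent d} (hq : q ∈ slice d s) :
    opPow φ q a ∈ M.cl (PhiEq φ s B ∪ (opPow φ · a) '' (slice d s \ Ici r₀)) := by
  induction hw : weight c q using Nat.strong_induction_on generalizing q with
  | _ n ih =>
    by_cases hrq : r₀ ≤ q
    · have hlead := hr₀.add hcomm htri hc (q - r₀)
      rw [add_tsub_cancel_of_le hrq, IsLeadingExponent, hq] at hlead
      refine M.cl_subset_cl (union_subset (fun z hz => M.subset_cl _ (Or.inl hz)) ?_) hlead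
      rintro _ ⟨q', ⟨hq', hlt⟩, rfl⟩
      exact ih _ (hw ▸ hlt) (hq'.trans hq) rfl
    · exact M.subset_cl _ (Or.inr ⟨q, ⟨hq, hrq⟩, rfl⟩)

end LeadingExponents

section Rank

variable {X : Type*} (M : FinMatroid X) {k : ℕ} {d : Fin k → ℕ}
  (φ : ∀ i : Fin k, Fin (d i) → X → X) {c : Exponent d} (B : Set X) (a : X)

lemma PhiEq_singleton_finite (s : Fin k → ℕ) : (PhiEq φ s {a}).Finite := by
  rw [PhiEq_singleton]
  exact (slice_finite s).image _

lemma rk_PhiEq_le_cntEq (s : Fin k → ℕ) : M.rk (PhiEq φ s {a}) (PhiEq φ s B) ≤ cntEq d s := by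
  refine (M.rk_le_ncard (PhiEq_singleton_finite φ a s) subset_rfl
    fun x hx => M.subset_cl _ (Or.inr hx)).trans ?_
  rw [PhiEq_singleton, cntEq_eq_ncard_slice]
  exact ncard_image_le (slice_finite s)

variable {M φ B a}

/-- Otherwise the `φ^q̄(a)`, `q̄ ∈ slice d s̄₀`, ordered by weight, are in echelon form over
`Φ^{(s̄₀)}(B)`, and the rank would be full. -/
lemma exists_isLeadingExponent_of_rk_lt {s₀ : Fin k → ℕ} (hc : InjOn (weight c) (slice d s₀))
    (hlt : M.rk (PhiEq φ s₀ {a}) (PhiEq φ s₀ B) < cntEq d s₀) :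
    ∃ r₀ ∈ slice d s₀, IsLeadingExponent M φ c B a r₀ := by
  by_contra! h
  obtain ⟨B₀, hB₀, hcard⟩ :=
    M.exists_isBasisOver_ncard_eq_rk (W := PhiEq φ s₀ B) (PhiEq_singleton_finite φ a s₀)
  have hR : ∀ {q}, q ∈ (slice_finite s₀).toFinset ↔ q ∈ slice d s₀ := Finite.mem_toFinset _
  have hech := M.card_le_ncard_of_echelon ((PhiEq_singleton_finite φ a s₀).subset hB₀.1)
    (opPow φ · a) (weight c) (R := (slice_finite s₀).toFinset) (by simpa using hc)
    (fun r hr => by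
      have hrs : blockSum r = s₀ := hR.1 hr
      simpa [IsLeadingExponent, lowerTerms, hrs, hR, slice] using h r hrs)
    (fun r hr => hB₀.2.2 ((PhiEq_singleton φ s₀ a).symm ▸ mem_image_of_mem _ (hR.1 hr)))
  rw [cntEq_eq_ncard_slice, ncard_eq_toFinset_card _ (slice_finite s₀)] at hlt
  omega

lemma rk_add_cntEq_sub_le (hcomm : Commuting φ) (htri : ∀ i, Triangular M (φ i))
    (hc : ∀ i, Monotone (c i)) {s₀ s : Fin k → ℕ} {r₀ : Exponent d} (hr₀s : r₀ ∈ slice d s₀)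
    (hr₀ : IsLeadingExponent M φ c B a r₀) (hs : s₀ ≤ s) :
    M.rk (PhiEq φ s {a}) (PhiEq φ s B) + cntEq d (s - s₀) ≤ cntEq d s := by
  have hQ : (slice d s \ Ici r₀).Finite := (slice_finite s).sdiff
  have hrk : M.rk (PhiEq φ s {a}) (PhiEq φ s B) ≤ (slice d s \ Ici r₀).ncard := by
    refine (M.rk_le_ncard (hQ.image (opPow φ · a)) ?_ ?_).trans (ncard_image_le hQ)
    · rw [PhiEq_singleton]
      exact image_mono sdiff_subset
    · rw [PhiEq_singleton]
      rintro _ ⟨q, hq, rfl⟩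
      exact opPow_mem_cl_of_isLeadingExponent hcomm htri hc hr₀ hq
  rw [← ncard_slice_inter_Ici hr₀s hs, cntEq_eq_ncard_slice,
    ← ncard_inter_add_ncard_sdiff_eq_ncard (slice d s) (Ici r₀) (slice_finite s)]
  omega

end Rank

section Limits

variable {k : ℕ} {d : Fin k → ℕ}

open Filter Topology

lemma tendsto_multichoose_sub_div_multichoose {n : ℕ} (hn : 0 < n) (a : ℕ) :
    Tendsto (fun m => (n.multichoose (m - a) : ℝ) / n.multichoose m) atTop (𝓝 1) := by
  obtain ⟨e, rfl⟩ : ∃ e, n = e + 1 := ⟨n - 1, by omega⟩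
  have hmulti : ∀ m, ((e + 1).multichoose m : ℝ) = (m + 1).ascFactorial e / e.factorial := by
    intro m
    rw [Nat.ascFactorial_eq_factorial_mul_choose, Nat.multichoose_eq,
      show e + 1 + m - 1 = m + e by omega, Nat.choose_symm_add]
    field_simp
    push_cast
    ring
  rw [← tendsto_add_atTop_iff_nat a]
  have hfac : (e.factorial : ℝ) ≠ 0 := Nat.cast_ne_zero.2 (Nat.factorial_ne_zero e)
  simp_rw [Nat.add_sub_cancel, hmulti, div_div_div_cancel_right₀ hfac,
    Nat.ascFactorial_eq_prod_range, Nat.cast_prod, ← Finset.prod_div_distrib]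
  rw [← Finset.prod_const_one (s := Finset.range e) (M := ℝ)]
  refine tendsto_finsetProd _ fun t _ => ?_
  have := tendsto_add_mul_div_add_mul_atTop_nhds (1 + t : ℝ) (a + 1 + t) 1 one_ne_zero
  simp only [one_mul, div_one] at this
  refine this.congr fun m => ?_
  push_cast
  ring_nf

lemma tendsto_cntEq_sub_div_cntEq (hd : ∀ i, 0 < d i) (s₀ : Fin k → ℕ) :
    Tendsto (fun s => (cntEq d (s - s₀) : ℝ) / cntEq d s) atTop (𝓝 1) := by
  simp_rw [cntEq_eq_prod_multichoose, Nat.cast_prod, ← Finset.prod_div_distrib]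
  rw [← Finset.prod_const_one (s := (Finset.univ : Finset (Fin k))) (M := ℝ)]
  refine tendsto_finsetProd _ fun i _ => ?_
  exact (tendsto_multichoose_sub_div_multichoose (hd i) (s₀ i)).comp
    (Monotone.tendsto_atTop_atTop (fun _ _ h => h i) fun n => ⟨fun _ => n, le_rfl⟩)

lemma exists_forall_abs_sub_lt_of_tendsto {f : (Fin k → ℕ) → ℝ} {l : ℝ}
    (h : Tendsto f atTop (𝓝 l)) {ε : ℝ} (hε : 0 < ε) :
    ∃ N : ℕ, ∀ s : Fin k → ℕ, (∀ i, N ≤ s i) → |f s - l| < ε := by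
  obtain ⟨b, hb⟩ := Metric.tendsto_atTop.1 h ε hε
  exact ⟨Finset.univ.sup b, fun s hs =>
    hb s fun i => (Finset.le_sup (Finset.mem_univ i)).trans (hs i)⟩

variable {X : Type*} {M : FinMatroid X} {φ : ∀ i : Fin k, Fin (d i) → X → X} {a : X}
  {B : Set X}

lemma tendsto_rk_div_cntEq_of_mem_clPhi (hd : ∀ i, 0 < d i) (hcomm : Commuting φ)
    (htri : ∀ i, Triangular M (φ i)) (ha : a ∈ clPhi M φ B) :
    Tendsto (fun s => (M.rk (PhiEq φ s {a}) (PhiEq φ s B) : ℝ) / cntEq d s) atTop (𝓝 0) := by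
  obtain ⟨s₀, hs₀⟩ := ha
  obtain ⟨c, hc, hinj⟩ := exists_monotone_weight_injOn (d := d) s₀
  obtain ⟨r₀, hr₀s, hr₀⟩ := exists_isLeadingExponent_of_rk_lt hinj hs₀
  have hupper := (tendsto_cntEq_sub_div_cntEq hd s₀).const_sub 1
  rw [sub_self] at hupper
  refine tendsto_of_tendsto_of_tendsto_of_le_of_le' tendsto_const_nhds hupper
    (Eventually.of_forall fun s => by positivity) ?_
  filter_upwards [eventually_ge_atTop s₀] with s hs
  rw [le_sub_iff_add_le, ← add_div, div_le_one (Nat.cast_pos.2 (cntEq_pos hd s))]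
  exact_mod_cast rk_add_cntEq_sub_le hcomm htri hc hr₀s hr₀ hs

end Limits

theorem statement9_general {X : Type*} (M : FinMatroid X) {k : ℕ} {d : Fin k → ℕ}
    (hd : ∀ i, 0 < d i) (φ : ∀ i : Fin k, Fin (d i) → X → X) (hcomm : Commuting φ)
    (htri : ∀ i, Triangular M (φ i)) (a : X) (B : Set X) :
    (a ∈ clPhi M φ B →
      ∀ ε : ℝ, 0 < ε → ∃ N : ℕ, ∀ s : Fin k → ℕ, (∀ i, N ≤ s i) →
        |((M.rk (PhiEq φ s {a}) (PhiEq φ s B) : ℝ) / (cntEq d s : ℝ)) - 0| < ε) ∧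
    (a ∉ clPhi M φ B →
      ∀ ε : ℝ, 0 < ε → ∃ N : ℕ, ∀ s : Fin k → ℕ, (∀ i, N ≤ s i) →
        |((M.rk (PhiEq φ s {a}) (PhiEq φ s B) : ℝ) / (cntEq d s : ℝ)) - 1| < ε) := by
  refine ⟨fun ha ε hε => exists_forall_abs_sub_lt_of_tendsto
    (tendsto_rk_div_cntEq_of_mem_clPhi hd hcomm htri ha) hε, fun ha ε hε => ⟨0, fun s _ => ?_⟩⟩
  have hfull : M.rk (PhiEq φ s {a}) (PhiEq φ s B) = cntEq d s :=
    (rk_PhiEq_le_cntEq M φ B a s).antisymm (not_lt.1 fun h => ha ⟨s, h⟩)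
  rwa [hfull, div_self (Nat.cast_pos.2 (cntEq_pos hd s)).ne', sub_self, abs_zero]

/-- **Lemma 3.1.** If each `Φᵢ` is triangular, then for `a ∈ X` and `B ⊆ X` the limit
`lim_{min(s̄)→∞} rk(Φ^{(s̄)}({a}) | Φ^{(s̄)}(B)) / |Φ^{(s̄)}|` equals `0` if
`a ∈ cl^Φ(B)` and equals `1` if `a ∉ cl^Φ(B)`. -/
theorem statement9 {X : Type*} (M : FinMatroid X) {k : ℕ} (hk : 0 < k) {d : Fin k → ℕ}
    (hd : ∀ i, 0 < d i) (φ : ∀ i : Fin k, Fin (d i) → X → X) (hcomm : Commuting φ)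
    (htri : ∀ i, Triangular M (φ i)) (a : X) (B : Set X) :
    (a ∈ clPhi M φ B →
      ∀ ε : ℝ, 0 < ε → ∃ N : ℕ, ∀ s : Fin k → ℕ, (∀ i, N ≤ s i) →
        |((M.rk (PhiEq φ s {a}) (PhiEq φ s B) : ℝ) / (cntEq d s : ℝ)) - 0| < ε) ∧
    (a ∉ clPhi M φ B →
      ∀ ε : ℝ, 0 < ε → ∃ N : ℕ, ∀ s : Fin k → ℕ, (∀ i, N ≤ s i) →
        |((M.rk (PhiEq φ s {a}) (PhiEq φ s B) : ℝ) / (cntEq d s : ℝ)) - 1| < ε) :=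
  statement9_general M hd φ hcomm htri a B
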